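/- Let n = 4 and let c be a parameter collection. Suppose there exist a sequence t_m → 0⁺ and unit vectors ξ_m ∈ S^3 ⊂ ℝ^4 with rank P(ξ_m, t_m c) ≤ 2 for every m (i.e., all 3×3 minors of the principal symbol vanish at ξ_m), such that ξ_m → a = (0, 0, 0, a_4) with a_4 ≠ 0. Then c_2^{41} c_1^{43} c_3^{42} = c_1^{42} c_3^{41} c_2^{43}. -/

import Mathlib

/-!
Write `P(ξ, t c) = diag ξ + t B(ξ)`, where `B(ξ)_{ij} = Σ_{k ≠ j} ξ_k c_i^{kj}`. Along the
sequence the pivot `P_44` tends to `a_4 ≠ 0`, and rank `P ≤ 2` makes every 2×2 minor of the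
Schur complement `S` of that pivot vanish; two of them give the cyclic identity
`S_12 S_23 S_31 = S_13 S_32 S_21`. Off the diagonal `S_ij = t (B_ij - t B_i4 B_4j / P_44)`, so
after dividing by `t³` the identity passes to the limit `t → 0`, where `B_ij(a) = a_4 c_i^{4j}`.
-/

open Matrix

/-- A parameter collection: `c i k j` denotes `c_i^{kj}`, symmetric in the two
superscripts, with normalizations `c_i^{ii} = 1` and `c_i^{jj} = 0` for `i ≠ j`. -/
def IsParamColl (n : ℕ) (c : Fin n → Fin n → Fin n → ℝ) : Prop :=
  (∀ i j k : Fin n, j ≠ k → c i k j = c i j k) ∧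
  (∀ i : Fin n, c i i i = 1) ∧
  (∀ i j : Fin n, i ≠ j → c i j j = 0)

/-- The principal symbol `P(ξ, c) = Σ_k ξ_k A^k`, where `(A^k)_{ij} = c_i^{kj}`. -/
def pSymb {n : ℕ} (ξ : Fin n → ℝ) (c : Fin n → Fin n → Fin n → ℝ) :
    Matrix (Fin n) (Fin n) ℝ :=
  Matrix.of fun i j => ∑ k, ξ k * c i k j

/-- The scaled parameter collection `t • c` (normalized entries unchanged). -/
def pScale {n : ℕ} (t : ℝ) (c : Fin n → Fin n → Fin n → ℝ) :
    Fin n → Fin n → Fin n → ℝ :=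
  fun i k j => if k = j then c i k j else t * c i k j

open Filter Topology Finset

section Schur

variable {K : Type*} [Field K] {n : Type*}

theorem Matrix.det_submatrix_eq_zero_of_rank_lt {m : Type*} [Fintype n] {k : ℕ}
    (A : Matrix m n K) (hA : A.rank < k) (r : Fin k → m) (c : Fin k → n) :
    (A.submatrix r c).det = 0 := by
  by_contra h
  have hfull := rank_of_isUnit (A.submatrix r c) ((isUnit_iff_isUnit_det _).mpr (Ne.isUnit h))
  have hle := rank_submatrix_le A r c
  simp only [Fintype.card_fin] at hfull
  omega

def schurComplementEntry (A : Matrix n n K) (p i j : n) : K :=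
  A i j - A i p * A p j / A p p

theorem det_submatrix_pivot (A : Matrix n n K) {p : n} (hp : A p p ≠ 0) (i j k l : n) :
    (A.submatrix ![i, j, p] ![k, l, p]).det =
      A p p * (schurComplementEntry A p i k * schurComplementEntry A p j l -
        schurComplementEntry A p i l * schurComplementEntry A p j k) := by
  simp only [det_fin_three, submatrix_apply, schurComplementEntry, Fin.isValue, cons_val_zero,
    cons_val_one, Matrix.cons_val]
  field_simp
  ring

theorem schurComplementEntry_cycle [Fintype n] (A : Matrix n n K) (hA : A.rank ≤ 2) {p : n}
    (hp : A p p ≠ 0) (i j k : n) :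
    schurComplementEntry A p i j * schurComplementEntry A p j k *
        schurComplementEntry A p k i =
      schurComplementEntry A p i k * schurComplementEntry A p k j *
        schurComplementEntry A p j i := by
  have minor_zero : ∀ i j k l : n,
      schurComplementEntry A p i k * schurComplementEntry A p j l -
        schurComplementEntry A p i l * schurComplementEntry A p j k = 0 := fun i j k l =>
    (mul_eq_zero.mp ((det_submatrix_pivot A hp i j k l).symm.trans
      (A.det_submatrix_eq_zero_of_rank_lt (by omega) _ _))).resolve_left hp
  linear_combination schurComplementEntry A p j k * minor_zero i k j i -
    schurComplementEntry A p k j * minor_zero i j k i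

variable [DecidableEq n]

theorem schurComplementEntry_diagonal_add_smul (d : n → K) (t : K) (B : Matrix n n K)
    {p i j : n} (hij : i ≠ j) (hip : i ≠ p) (hpj : p ≠ j) :
    schurComplementEntry (diagonal d + t • B) p i j =
      t * (B i j - t * B i p * B p j / (diagonal d + t • B) p p) := by
  simp only [schurComplementEntry, Matrix.add_apply, Matrix.smul_apply, smul_eq_mul,
    diagonal_apply_ne _ hij, diagonal_apply_ne _ hip, diagonal_apply_ne _ hpj]
  ring

end Schur

section Symbol

variable {n : ℕ} (c : Fin n → Fin n → Fin n → ℝ)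

def offSymb (x : Fin n → ℝ) : Matrix (Fin n) (Fin n) ℝ :=
  of fun i j => ∑ k ∈ univ.erase j, x k * c i k j

theorem pSymb_pScale {c} (hc : IsParamColl n c) (t : ℝ) (x : Fin n → ℝ) :
    pSymb x (pScale t c) = diagonal x + t • offSymb c x := by
  ext i j
  simp only [pSymb, pScale, offSymb, of_apply, Matrix.add_apply, Matrix.smul_apply, smul_eq_mul,
    mul_sum]
  rw [← add_sum_erase _ _ (mem_univ j), if_pos rfl]
  congr 1
  · rcases eq_or_ne i j with rfl | hij
    · simp [hc.2.1]
    · simp [hc.2.2 i j hij, diagonal_apply_ne _ hij]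
  · refine sum_congr rfl fun k hk => ?_
    rw [if_neg (ne_of_mem_erase hk)]
    ring

theorem tendsto_offSymb_apply {ι : Type*} {l : Filter ι} {ξ : ι → Fin n → ℝ}
    {a : Fin n → ℝ} (hξ : Tendsto ξ l (𝓝 a)) (i j : Fin n) :
    Tendsto (fun m => offSymb c (ξ m) i j) l (𝓝 (offSymb c a i j)) := by
  simp only [offSymb, of_apply]
  exact tendsto_finsetSum _ fun k _ => (tendsto_pi_nhds.mp hξ k).mul_const _

theorem offSymb_apply_of_forall_ne_eq_zero {a : Fin n → ℝ} {p : Fin n}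
    (ha : ∀ k ≠ p, a k = 0) (i : Fin n) {j : Fin n} (hj : j ≠ p) :
    offSymb c a i j = a p * c i p j :=
  sum_eq_single_of_mem p (mem_erase.mpr ⟨hj.symm, mem_univ p⟩)
    fun k _ hk => by rw [ha k hk, zero_mul]

end Symbol

/-- The paper's indices `1, 2, 3, 4` are `0, 1, 2, 3 : Fin 4`. -/
theorem stmt15_general (c : Fin 4 → Fin 4 → Fin 4 → ℝ) (hc : IsParamColl 4 c)
    (t : ℕ → ℝ) (ht0 : ∀ m, 0 < t m)
    (htlim : Filter.Tendsto t Filter.atTop (nhds 0))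
    (ξ : ℕ → Fin 4 → ℝ)
    (hrank : ∀ m, (pSymb (ξ m) (pScale (t m) c)).rank ≤ 2)
    (a : Fin 4 → ℝ) (ha0 : a 0 = 0) (ha1 : a 1 = 0) (ha2 : a 2 = 0) (ha3 : a 3 ≠ 0)
    (hlim : Filter.Tendsto ξ Filter.atTop (nhds a)) :
    c 1 3 0 * c 0 3 2 * c 2 3 1 = c 0 3 1 * c 2 3 0 * c 1 3 2 := by
  set A := fun m => pSymb (ξ m) (pScale (t m) c)
  set B := fun m => offSymb c (ξ m)
  have hA : ∀ m, A m = diagonal (ξ m) + t m • B m := fun m => pSymb_pScale hc _ _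
  have ha : ∀ k ≠ 3, a k = 0 := by
    intro k hk
    fin_cases k <;> simp_all
  have hpivot : Tendsto (fun m => A m 3 3) atTop (𝓝 (a 3)) := by
    have h := ((tendsto_pi_nhds.mp hlim) 3).add (htlim.mul (tendsto_offSymb_apply c hlim 3 3))
    simp only [zero_mul, add_zero] at h
    refine h.congr fun m => ?_
    simp [hA, B]
  set s := fun m i j => B m i j - t m * B m i 3 * B m 3 j / A m 3 3
  have hs : ∀ i j, j ≠ 3 → Tendsto (fun m => s m i j) atTop (𝓝 (a 3 * c i 3 j)) := by
    intro i j hj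
    have h := (tendsto_offSymb_apply c hlim i j).sub
      (((htlim.mul (tendsto_offSymb_apply c hlim i 3)).mul
        (tendsto_offSymb_apply c hlim 3 j)).div hpivot ha3)
    rwa [zero_mul, zero_mul, zero_div, sub_zero,
      offSymb_apply_of_forall_ne_eq_zero c ha i hj] at h
  have hcycle : ∀ᶠ m in atTop, s m 0 1 * s m 1 2 * s m 2 0 = s m 0 2 * s m 2 1 * s m 1 0 := by
    filter_upwards [hpivot.eventually_ne ha3] with m hm
    have h := schurComplementEntry_cycle (A m) (hrank m) hm 0 1 2
    simp only [hA, schurComplementEntry_diagonal_add_smul, ne_eq, Fin.reduceEq,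
      not_false_eq_true] at h
    refine mul_left_cancel₀ (pow_ne_zero 3 (ht0 m).ne') ?_
    simp only [s, hA]
    linear_combination h
  have hlimit := tendsto_nhds_unique_of_eventuallyEq
    (((hs 0 1 (by decide)).mul (hs 1 2 (by decide))).mul (hs 2 0 (by decide)))
    (((hs 0 2 (by decide)).mul (hs 2 1 (by decide))).mul (hs 1 0 (by decide))) hcycle
  exact mul_left_cancel₀ (pow_ne_zero 3 ha3) (by linear_combination -hlimit)

/-- The indices 1,2,3,4 of the paper correspond to `0,1,2,3 : Fin 4`.  The
conclusion `c_2^{41} c_1^{43} c_3^{42} = c_1^{42} c_3^{41} c_2^{43}` reads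
`c 1 3 0 * c 0 3 2 * c 2 3 1 = c 0 3 1 * c 2 3 0 * c 1 3 2`. -/
theorem stmt15 (c : Fin 4 → Fin 4 → Fin 4 → ℝ) (hc : IsParamColl 4 c)
    (t : ℕ → ℝ) (ht0 : ∀ m, 0 < t m)
    (htlim : Filter.Tendsto t Filter.atTop (nhds 0))
    (ξ : ℕ → Fin 4 → ℝ) (hξunit : ∀ m, ∑ k, (ξ m k) ^ 2 = 1)
    (hrank : ∀ m, (pSymb (ξ m) (pScale (t m) c)).rank ≤ 2)
    (a : Fin 4 → ℝ) (ha0 : a 0 = 0) (ha1 : a 1 = 0) (ha2 : a 2 = 0) (ha3 : a 3 ≠ 0)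
    (hlim : Filter.Tendsto ξ Filter.atTop (nhds a)) :
    c 1 3 0 * c 0 3 2 * c 2 3 1 = c 0 3 1 * c 2 3 0 * c 1 3 2 :=
  stmt15_general c hc t ht0 htlim ξ hrank a ha0 ha1 ha2 ha3 hlim
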